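/- Let k ≥ 3 and let σ ∈ S_n be a permutation such that σ is not equal to w₀^{(k′,a)} for any k′ > 2 and any a, and σ is not covered in the right weak order by any permutation of the form w₀^{(k′,a)} with k′ > 2. Then there is at most one j ∈ Des(σ) such that σ·s_j = w₀^{(k,a)} for some a. -/
import Mathlib


namespace RW

/-- The simple transposition `s i = (i, i+1)`, acting on `ℕ` (points are `1, …, n`;
the point `0` is unused, matching the paper's 1-indexed conventions). -/
def s (i : ℕ) : Equiv.Perm ℕ := Equiv.swap i (i + 1)

/-- The product `s i₁ * s i₂ * ⋯ * s iₗ` of the word `w = [i₁, …, iₗ]`. -/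
def π (w : List ℕ) : Equiv.Perm ℕ := (w.map s).prod

/-- The copy of the symmetric group `S_n` inside `Equiv.Perm ℕ`: permutations of
`{1, …, n}`, i.e. fixing `0` and every point `> n`. -/
def Sn (n : ℕ) : Set (Equiv.Perm ℕ) := {σ | ∀ m : ℕ, (m = 0 ∨ n < m) → σ m = m}

/-- The length `ℓ(σ)`: the number of inversions of `σ`. -/
noncomputable def len (σ : Equiv.Perm ℕ) : ℕ :=
  Nat.card {p : ℕ × ℕ // p.1 < p.2 ∧ σ p.2 < σ p.1}

/-- `w` is a reduced word for `σ`: its product is `σ` and its length is `ℓ(σ)`. -/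
def Reduced (σ : Equiv.Perm ℕ) (w : List ℕ) : Prop :=
  π w = σ ∧ w.length = len σ

/-- `R σ`: the set of reduced words of `σ`. -/
def R (σ : Equiv.Perm ℕ) : Set (List ℕ) := {w | Reduced σ w}

/-- The descent set `Des σ = {i ≥ 1 | σ(i) > σ(i+1)}`. -/
def Des (σ : Equiv.Perm ℕ) : Set ℕ := {i | 1 ≤ i ∧ σ (i + 1) < σ i}

/-- A single commutation move: swap two adjacent letters `a, b` with `|a - b| > 1`. -/
def CommMove (w w' : List ℕ) : Prop :=
  ∃ u v : List ℕ, ∃ a b : ℕ, 1 < ((a : ℤ) - (b : ℤ)).natAbs ∧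
    w = u ++ a :: b :: v ∧ w' = u ++ b :: a :: v

/-- A single braid move: replace consecutive letters `(a, a+1, a)` by `(a+1, a, a+1)`
or vice versa. -/
def BraidMove (w w' : List ℕ) : Prop :=
  ∃ u v : List ℕ, ∃ a : ℕ,
    (w = u ++ a :: (a+1) :: a :: v ∧ w' = u ++ (a+1) :: a :: (a+1) :: v) ∨
    (w = u ++ (a+1) :: a :: (a+1) :: v ∧ w' = u ++ a :: (a+1) :: a :: v)

/-- The braid degree of a word: the number of words obtainable from it by a single
braid move.  (For `w ∈ R σ` these are exactly the braid-edge neighbours of `w` in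
`G(σ)`, since a braid move sends reduced words of `σ` to reduced words of `σ`.) -/
noncomputable def dB (w : List ℕ) : ℕ := Nat.card {w' : List ℕ // BraidMove w w'}

/-- The commutation degree of a word: the number of words obtainable from it by a
single commutation move. -/
noncomputable def dC (w : List ℕ) : ℕ := Nat.card {w' : List ℕ // CommMove w w'}

/-- The number `|B(σ)|` of braid classes: classes of `R σ` under the equivalence
generated by single braid moves. -/
noncomputable def nB (σ : Equiv.Perm ℕ) : ℕ :=
  Nat.card (Quot (fun w w' : R σ => BraidMove w.1 w'.1))

/-- The number `|C(σ)|` of commutation classes. -/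
noncomputable def nC (σ : Equiv.Perm ℕ) : ℕ :=
  Nat.card (Quot (fun w w' : R σ => CommMove w.1 w'.1))

/-- The underlying function of `w₀^{(k,i)}`: reverse the interval `{i, …, i+k-1}`. -/
def w0fun (k i : ℕ) : ℕ → ℕ := fun m => if i ≤ m ∧ m < i + k then i + (i + k - 1) - m else m

theorem w0fun_involutive (k i : ℕ) : Function.Involutive (w0fun k i) := by
  intro m
  unfold w0fun
  split_ifs <;> omega

/-- `w₀^{(k,i)}`: the permutation fixing every point outside `{i, …, i+k-1}` and
reversing that interval. -/
def w0 (k i : ℕ) : Equiv.Perm ℕ := (w0fun_involutive k i).toPerm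

/-- Right weak order: `τ ≤ σ` iff `ℓ(τ) + ℓ(τ⁻¹σ) = ℓ(σ)`. -/
def wle (τ σ : Equiv.Perm ℕ) : Prop := len τ + len (τ⁻¹ * σ) = len σ

/-- The support of `σ`: the letters appearing in some reduced word of `σ`. -/
def supp (σ : Equiv.Perm ℕ) : Set ℕ := {a | ∃ w, Reduced σ w ∧ a ∈ w}


lemma s_apply (j m : ℕ) : s j m = if m = j then j + 1 else if m = j + 1 then j else m := by
  simp [s, Equiv.swap_apply_def]

lemma w0_apply (k i m : ℕ) :
    w0 k i m = if i ≤ m ∧ m < i + k then i + (i + k - 1) - m else m := rfl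

lemma s_inv (j m : ℕ) : s j (s j m) = m := by
  simp only [s_apply]; split_ifs <;> omega

lemma w0_inv (k i m : ℕ) : w0 k i (w0 k i m) = m := w0fun_involutive k i m

lemma key (k a b j₁ j₂ : ℕ) (hk : 3 ≤ k) (hab : a < b)
    (hE : ∀ m, w0 k b (w0 k a m) = s j₂ (s j₁ m)) : False := by
  have h1 := hE (b + k - 1)
  simp only [w0_apply, s_apply] at h1
  have hv : k = 3 ∧ j₁ = b + 1 ∧ j₂ = b := by
    split_ifs at h1 <;> omega
  obtain ⟨hk3, hj1, hj2⟩ := hv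
  have h2 := hE (b + 1)
  simp only [w0_apply, s_apply] at h2
  split_ifs at h2 <;> omega

/-- let `k ≥ 3` and `σ ∈ S_n` with `σ` not of the form `w₀^{(k',a)}`
for any `k' > 2`, and `σ` not covered in right weak order by any such permutation
(`γ` covers `τ` iff `τ = γ s_j` for some `j ∈ Des γ`).  Then there is at most one
`j ∈ Des σ` such that `σ s_j = w₀^{(k,a)}` for some `a`. -/
theorem statement_19 (n k : ℕ) (hk : 3 ≤ k) (σ : Equiv.Perm ℕ) (hσ : σ ∈ Sn n)
    (h1 : ¬ ∃ k' a : ℕ, 2 < k' ∧ 1 ≤ a ∧ σ = w0 k' a)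
    (h2 : ¬ ∃ k' a j : ℕ, 2 < k' ∧ 1 ≤ a ∧ j ∈ Des (w0 k' a) ∧ σ = w0 k' a * s j) :
    ∀ j₁ ∈ Des σ, ∀ j₂ ∈ Des σ,
      (∃ a : ℕ, 1 ≤ a ∧ σ * s j₁ = w0 k a) →
      (∃ a : ℕ, 1 ≤ a ∧ σ * s j₂ = w0 k a) → j₁ = j₂ := by
  intro j₁ hj₁ j₂ hj₂ hA' hB'
  obtain ⟨a, ha, hA⟩ := hA'
  obtain ⟨b, hb, hB⟩ := hB'
  have hE : ∀ (j₁ j₂ a b : ℕ), σ * s j₁ = w0 k a → σ * s j₂ = w0 k b →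
      ∀ m, w0 k b (w0 k a m) = s j₂ (s j₁ m) := by
    intro j₁ j₂ a b hA hB m
    have e1 : w0 k a m = σ (s j₁ m) := by rw [← hA]; rfl
    have e2 : σ (s j₁ m) = w0 k b (s j₂ (s j₁ m)) := by
      rw [← hB, Equiv.Perm.mul_apply, s_inv]
    rw [e1, e2, w0_inv]
  rcases lt_trichotomy a b with hab | hab | hab
  · exact absurd (hE j₁ j₂ a b hA hB) (fun h => key k a b j₁ j₂ hk hab h)
  · subst hab
    have hs : s j₁ = s j₂ := mul_left_cancel (hA.trans hB.symm)
    have := DFunLike.congr_fun hs j₁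
    simp only [s_apply] at this
    split_ifs at this <;> omega
  · exact absurd (hE j₂ j₁ b a hB hA) (fun h => key k b a j₂ j₁ hk hab h)


end RW
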